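/- arXiv:1810.08711 — 4 statements merged into one kernel-verified Lean document; each statement's English description precedes it below -/
import Mathlib

section
/- Let G be a finite connected undirected graph on N vertices with closed neighbourhoods N_i (containing i). For any vector x of strictly positive reals and any vector p of strictly positive reals, ∑_i x_i · (∑_{j ∈ N_i} x_j) ≤ ∑_i x_i^2 · (∑_{j ∈ N_i} p_j) / p_i, i.e. the rate allocation φ_i(x) = x_i / ∑_{j ∈ N_i} x_j minimizes ∑_i x_i · (μ_i / x_i)^{-1} over allocations of the form μ_i = p_i / ∑_{j ∈ N_i} p_j. -/
/-!
Expanding both sides, the claim compares `∑ x i * x j` with `∑ x i ^ 2 * p j / p i` over the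
ordered pairs `(i, j)` with `j ∈ N i`. Closed neighbourhood membership is symmetric, so each pair
can be matched with `(j, i)`, and then `2 x_i x_j ≤ x_i² p_j / p_i + x_j² p_i / p_j` is AM–GM.
-/

open Finset

lemma two_mul_mul_le_sq_mul_div_add_sq_mul_div (a b : ℝ) {r s : ℝ} (hr : 0 < r) (hs : 0 < s) :
    2 * (a * b) ≤ a ^ 2 * s / r + b ^ 2 * r / s := by
  have key : a ^ 2 * s / r + b ^ 2 * r / s - 2 * (a * b) = (a * s - b * r) ^ 2 / (r * s) := by
    field_simp
    ring
  have : 0 ≤ (a * s - b * r) ^ 2 / (r * s) := by positivity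
  linarith

section SymmetricDoubleSum

variable {ι : Type*} [Fintype ι] {N : ι → Finset ι}

lemma sum_sum_swap_of_mem_comm {M : Type*} [AddCommMonoid M]
    (hN : ∀ i j, j ∈ N i ↔ i ∈ N j) (f : ι → ι → M) :
    ∑ i, ∑ j ∈ N i, f i j = ∑ i, ∑ j ∈ N i, f j i :=
  sum_comm' fun i j => by simp [hN i j]

lemma sum_sum_le_of_mem_comm (hN : ∀ i j, j ∈ N i ↔ i ∈ N j) {f g : ι → ι → ℝ}
    (hfg : ∀ i, ∀ j ∈ N i, f i j + f j i ≤ g i j + g j i) :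
    ∑ i, ∑ j ∈ N i, f i j ≤ ∑ i, ∑ j ∈ N i, g i j := by
  have symmetrize : ∀ h : ι → ι → ℝ,
      2 * ∑ i, ∑ j ∈ N i, h i j = ∑ i, ∑ j ∈ N i, (h i j + h j i) := by
    intro h
    rw [two_mul]
    nth_rw 2 [sum_sum_swap_of_mem_comm hN h]
    simp only [sum_add_distrib]
  have : 2 * ∑ i, ∑ j ∈ N i, f i j ≤ 2 * ∑ i, ∑ j ∈ N i, g i j := by
    rw [symmetrize f, symmetrize g]
    exact sum_le_sum fun i _ => sum_le_sum (hfg i)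
  linarith

end SymmetricDoubleSum

lemma SimpleGraph.mem_insert_neighborFinset_comm {V : Type*} [DecidableEq V] (G : SimpleGraph V)
    [∀ v, Fintype (G.neighborSet v)] (i j : V) :
    j ∈ insert i (G.neighborFinset i) ↔ i ∈ insert j (G.neighborFinset j) := by
  simp only [mem_insert, SimpleGraph.mem_neighborFinset, eq_comm (a := i), G.adj_comm]

theorem stmt_3_general {V : Type*} [Fintype V] [DecidableEq V]
    (G : SimpleGraph V) [DecidableRel G.Adj]
    (x p : V → ℝ) (hp : ∀ i, 0 < p i) :
    ∑ i, x i * ∑ j ∈ insert i (G.neighborFinset i), x j ≤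
      ∑ i, x i ^ 2 * (∑ j ∈ insert i (G.neighborFinset i), p j) / p i := by
  simp only [mul_sum, sum_div]
  refine sum_sum_le_of_mem_comm G.mem_insert_neighborFinset_comm fun i j _ => ?_
  rw [mul_comm (x j) (x i), ← two_mul]
  exact two_mul_mul_le_sq_mul_div_add_sq_mul_div (x i) (x j) (hp i) (hp j)

theorem stmt_3 {V : Type*} [Fintype V] [DecidableEq V]
    (G : SimpleGraph V) [DecidableRel G.Adj] (hconn : G.Connected)
    (x p : V → ℝ) (hx : ∀ i, 0 < x i) (hp : ∀ i, 0 < p i) :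
    ∑ i, x i * ∑ j ∈ insert i (G.neighborFinset i), x j ≤
      ∑ i, x i ^ 2 * (∑ j ∈ insert i (G.neighborFinset i), p j) / p i :=
  stmt_3_general G x p hp
end

section
/- Let G be a finite connected undirected graph with closed neighbourhoods N_i, and let x, p be vectors of strictly positive reals. Then ∑_i x_i^2 (∑_{j ∈ N_i} p_j)/p_i = ∑_i x_i ∑_{j ∈ N_i} x_j holds if and only if p_i / x_i is the same constant for all i. -/
/-!
Put `f i j = x i ^ 2 * p j / p i - x i * x j`. The difference of the two sides is the sum of
`f i j` over ordered pairs `j ∈ N i`; the diagonal terms vanish, and pairing `f i j` with `f j i`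
gives `(x i * p j - x j * p i) ^ 2 / (p i * p j) ≥ 0`. So the two sides agree iff every edge
carries the same ratio `p / x` at both ends, i.e. iff `p / x` is constant on the connected graph.
-/

open Finset

namespace SimpleGraph

variable {V : Type*}

theorem Reachable.eq_of_forall_adj {α : Type*} {G : SimpleGraph V} {f : V → α}
    (hf : ∀ u v, G.Adj u v → f u = f v) {u v : V} (h : G.Reachable u v) : f u = f v := by
  obtain ⟨w⟩ := h
  induction w with
  | nil => rfl
  | cons hadj _ ih => exact (hf _ _ hadj).trans ih

theorem Connected.exists_forall_eq_iff {α : Type*} {G : SimpleGraph V} (hG : G.Connected)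
    {f : V → α} : (∃ c, ∀ v, f v = c) ↔ ∀ u v, G.Adj u v → f u = f v := by
  refine ⟨fun ⟨c, hc⟩ u v _ => (hc u).trans (hc v).symm, fun hf => ?_⟩
  obtain ⟨v₀⟩ := hG.nonempty
  exact ⟨f v₀, fun v => (hG v v₀).eq_of_forall_adj hf⟩

theorem sum_sum_neighborFinset_comm [Fintype V] (G : SimpleGraph V) [DecidableRel G.Adj]
    {M : Type*} [AddCommMonoid M] (f : V → V → M) :
    ∑ u, ∑ v ∈ G.neighborFinset u, f u v = ∑ u, ∑ v ∈ G.neighborFinset u, f v u :=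
  sum_comm' fun u v => by simp [adj_comm]

end SimpleGraph

open SimpleGraph

section

variable {V : Type*} [Fintype V] (G : SimpleGraph V) [DecidableRel G.Adj]

theorem two_mul_sum_closedNbhd_sub_eq_sum_sq [DecidableEq V] (x p : V → ℝ)
    (hp : ∀ i, p i ≠ 0) :
    2 * (∑ i, x i ^ 2 * (∑ j ∈ insert i (G.neighborFinset i), p j) / p i -
      ∑ i, x i * ∑ j ∈ insert i (G.neighborFinset i), x j) =
    ∑ i, ∑ j ∈ G.neighborFinset i, (x i * p j - x j * p i) ^ 2 / (p i * p j) := by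
  set f : V → V → ℝ := fun i j => x i ^ 2 * p j / p i - x i * x j
  have hdiff : ∑ i, x i ^ 2 * (∑ j ∈ insert i (G.neighborFinset i), p j) / p i -
      ∑ i, x i * ∑ j ∈ insert i (G.neighborFinset i), x j =
      ∑ i, ∑ j ∈ G.neighborFinset i, f i j := by
    rw [← sum_sub_distrib]
    refine sum_congr rfl fun i _ => ?_
    rw [mul_sum, sum_div, mul_sum, ← sum_sub_distrib, sum_insert (by simp)]
    simp [f, hp i, sq]
  have hpair : ∀ i j, f i j + f j i = (x i * p j - x j * p i) ^ 2 / (p i * p j) := by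
    intro i j
    simp only [f]
    field_simp [hp i, hp j]
    ring
  rw [hdiff, two_mul]
  nth_rw 2 [sum_sum_neighborFinset_comm]
  simp only [← sum_add_distrib, hpair]

theorem sum_sum_neighborFinset_sq_div_eq_zero_iff (x p : V → ℝ) (hx : ∀ i, 0 < x i)
    (hp : ∀ i, 0 < p i) :
    ∑ i, ∑ j ∈ G.neighborFinset i, (x i * p j - x j * p i) ^ 2 / (p i * p j) = 0 ↔
      ∀ i j, G.Adj i j → p i / x i = p j / x j := by
  have hterm : ∀ i j, 0 ≤ (x i * p j - x j * p i) ^ 2 / (p i * p j) :=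
    fun i j => div_nonneg (sq_nonneg _) (mul_pos (hp i) (hp j)).le
  rw [sum_eq_zero_iff_of_nonneg fun i _ => sum_nonneg fun j _ => hterm i j]
  simp only [mem_univ, true_implies, sum_eq_zero_iff_of_nonneg fun j _ => hterm _ j,
    mem_neighborFinset]
  refine forall₂_congr fun i j => imp_congr_right fun _ => ?_
  rw [div_eq_zero_iff, or_iff_left (mul_pos (hp i) (hp j)).ne', sq_eq_zero_iff, sub_eq_zero,
    div_eq_div_iff (hx i).ne' (hx j).ne']
  constructor <;> intro h <;> linarith

end

theorem stmt_4 {V : Type*} [Fintype V] [DecidableEq V]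
    (G : SimpleGraph V) [DecidableRel G.Adj] (hconn : G.Connected)
    (x p : V → ℝ) (hx : ∀ i, 0 < x i) (hp : ∀ i, 0 < p i) :
    (∑ i, x i ^ 2 * (∑ j ∈ insert i (G.neighborFinset i), p j) / p i =
      ∑ i, x i * ∑ j ∈ insert i (G.neighborFinset i), x j) ↔
    ∃ c : ℝ, ∀ i, p i / x i = c := by
  rw [← sub_eq_zero, ← mul_eq_zero_iff_left two_ne_zero,
    two_mul_sum_closedNbhd_sub_eq_sum_sq G x p fun i => (hp i).ne',
    sum_sum_neighborFinset_sq_div_eq_zero_iff G x p hx hp, hconn.exists_forall_eq_iff]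
end

section
/- Let ψ : ℝ_+^N → ℝ_+^N satisfy: (A) each ψ_i is non-increasing in x_j for every j ≠ i, and (B) each ψ_i is 0-homogeneous (ψ_i(s·x) = ψ_i(x) for all s > 0). Let p ∈ ℝ_+^N with all p_i > 0, let x ∈ ℝ_+^N, and let k be an index maximizing x_i/p_i over i, with x_k > 0. Then ψ_k(x) ≥ ψ_k(p). -/
theorem stmt_7_general {N : ℕ}
    (ψ : (Fin N → ℝ) → Fin N → ℝ)
    (hA : ∀ (i : Fin N) (x y : Fin N → ℝ), (∀ j, 0 ≤ x j) → (∀ j, 0 ≤ y j) →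
      x i = y i → (∀ j, j ≠ i → x j ≤ y j) → ψ y i ≤ ψ x i)
    (hB : ∀ (s : ℝ), 0 < s → ∀ (x : Fin N → ℝ), (∀ j, 0 ≤ x j) →
      ∀ i, ψ (fun j => s * x j) i = ψ x i)
    (p : Fin N → ℝ) (hp : ∀ i, 0 < p i)
    (x : Fin N → ℝ) (hx : ∀ i, 0 ≤ x i)
    (k : Fin N) (hk : ∀ j, x j / p j ≤ x k / p k) (hxk : 0 < x k) :
    ψ p k ≤ ψ x k := by
  set s := x k / p k
  have hs : 0 < s := div_pos hxk (hp k)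
  have hdiag : x k = s * p k := (div_mul_cancel₀ _ (hp k).ne').symm
  have hdom : ∀ j, j ≠ k → x j ≤ s * p j := fun j _ => (div_le_iff₀ (hp j)).1 (hk j)
  calc ψ p k = ψ (fun j => s * p j) k := (hB s hs p (fun j => (hp j).le) k).symm
    _ ≤ ψ x k := hA k x _ hx (fun j => by have := hp j; positivity) hdiag hdom

theorem stmt_7 {N : ℕ} (hN : 0 < N)
    (ψ : (Fin N → ℝ) → Fin N → ℝ)
    (hnonneg : ∀ x : Fin N → ℝ, (∀ j, 0 ≤ x j) → ∀ i, 0 ≤ ψ x i)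
    (hA : ∀ (i : Fin N) (x y : Fin N → ℝ), (∀ j, 0 ≤ x j) → (∀ j, 0 ≤ y j) →
      x i = y i → (∀ j, j ≠ i → x j ≤ y j) → ψ y i ≤ ψ x i)
    (hB : ∀ (s : ℝ), 0 < s → ∀ (x : Fin N → ℝ), (∀ j, 0 ≤ x j) →
      ∀ i, ψ (fun j => s * x j) i = ψ x i)
    (p : Fin N → ℝ) (hp : ∀ i, 0 < p i)
    (x : Fin N → ℝ) (hx : ∀ i, 0 ≤ x i)
    (k : Fin N) (hk : ∀ j, x j / p j ≤ x k / p k) (hxk : 0 < x k) :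
    ψ p k ≤ ψ x k :=
  stmt_7_general ψ hA hB p hp x hx k hk hxk
end

section
/- For N = 4 and strictly positive reals x_1, x_2, x_3, x_4 arranged on a cycle (indices mod 4), ∑_{i=1}^{4} x_i (x_i − x_{i+1}) / (x_{i−1} + x_i + x_{i+1}) ≥ 0. -/
/-!
Over the common denominator `2 (x₄ + x₁ + x₂)(x₁ + x₂ + x₃)(x₂ + x₃ + x₄)(x₃ + x₄ + x₁)` the
cyclic sum becomes a quintic form in the `xᵢ`, and this form is the cyclic sum of a fixed
combination of products of the variables with squares of linear forms, hence nonnegative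
on the positive orthant.
-/

/-- Found by linear programming over the terms `(monomial of degree 3) * (linear form)²`. -/
def sosSummand {R : Type*} [CommRing R] (a b c d : R) : R :=
  2 * c * d ^ 2 * (b - d) ^ 2 + 2 * a * b ^ 2 * (c - d) ^ 2 + 2 * b ^ 2 * c * (a - b) ^ 2 +
    2 * a * c ^ 2 * (a - b + c - d) ^ 2 +
    a * b * c * (3 * (a - d) ^ 2 + (a - c) ^ 2 + 5 * (c - d) ^ 2 + 4 * (a - b + c - d) ^ 2)

theorem sosSummand_nonneg {R : Type*} [CommRing R] [LinearOrder R] [IsStrictOrderedRing R]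
    {a b c d : R} (ha : 0 ≤ a) (hb : 0 ≤ b) (hc : 0 ≤ c) : 0 ≤ sosSummand a b c d := by
  unfold sosSummand
  positivity

theorem cyclic_sum_eq_sosSummand_div {K : Type*} [Field K] [NeZero (2 : K)] {x1 x2 x3 x4 : K}
    (h1 : x4 + x1 + x2 ≠ 0) (h2 : x1 + x2 + x3 ≠ 0) (h3 : x2 + x3 + x4 ≠ 0)
    (h4 : x3 + x4 + x1 ≠ 0) :
    x1 * (x1 - x2) / (x4 + x1 + x2) + x2 * (x2 - x3) / (x1 + x2 + x3) +
        x3 * (x3 - x4) / (x2 + x3 + x4) + x4 * (x4 - x1) / (x3 + x4 + x1) =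
      (sosSummand x1 x2 x3 x4 + sosSummand x2 x3 x4 x1 + sosSummand x3 x4 x1 x2 +
          sosSummand x4 x1 x2 x3) /
        (2 * ((x4 + x1 + x2) * (x1 + x2 + x3) * (x2 + x3 + x4) * (x3 + x4 + x1))) := by
  unfold sosSummand
  field_simp
  ring

theorem stmt_11 (x1 x2 x3 x4 : ℝ) (h1 : 0 < x1) (h2 : 0 < x2) (h3 : 0 < x3)
    (h4 : 0 < x4) :
    x1 * (x1 - x2) / (x4 + x1 + x2) + x2 * (x2 - x3) / (x1 + x2 + x3) +
      x3 * (x3 - x4) / (x2 + x3 + x4) + x4 * (x4 - x1) / (x3 + x4 + x1) ≥ 0 := by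
  rw [cyclic_sum_eq_sosSummand_div (by positivity) (by positivity) (by positivity)
    (by positivity), ge_iff_le]
  refine div_nonneg ?_ (by positivity)
  linarith [sosSummand_nonneg (d := x4) h1.le h2.le h3.le,
    sosSummand_nonneg (d := x1) h2.le h3.le h4.le,
    sosSummand_nonneg (d := x2) h3.le h4.le h1.le,
    sosSummand_nonneg (d := x3) h4.le h1.le h2.le]
end
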